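/- (Lanes extension lemma) Let π be a policy, π̂ a restriction of a policy ρ with domain(π̂) = domain(π), such that escape(π,s) = escape(π̂,s) for all s ∈ domain(π). Let s* ∈ front(π) with action a applicable to s*, and set π' = π ∪ {s* ↦ a}, π̂' = π̂ ∪ {s* ↦ a}. Then escape(π',s) = escape(π̂',s) for every s ∈ domain(π'). -/

import Mathlib

/-- The domain of a policy (partial function from states to actions). -/
def pdom {S A : Type*} (π : S → Option A) : Set S := {s | π s ≠ none}

/-- One π-transition step: from `s` take the action `π s` prescribes, landing in a successor. -/
def pstep {S A : Type*} (succs : S → A → Set S) (π : S → Option A) (s s' : S) : Prop :=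
  ∃ a, π s = some a ∧ s' ∈ succs s a

/-- `reachFrom succs π s` : states reachable from `s` by π-trajectories (including `s`). -/
def reachFrom {S A : Type*} (succs : S → A → Set S) (π : S → Option A) (s : S) : Set S :=
  {s' | Relation.ReflTransGen (pstep succs π) s s'}

/-- `reachAll succs π` : states reachable from some domain state of `π`. -/
def reachAll {S A : Type*} (succs : S → A → Set S) (π : S → Option A) : Set S :=
  ⋃ s ∈ pdom π, reachFrom succs π s

/-- Frontier of a policy: reachable but unmapped states. -/
def front {S A : Type*} (succs : S → A → Set S) (π : S → Option A) : Set S :=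
  reachAll succs π \ pdom π

/-- `escape succs π s` : frontier states π-reachable from `s`. -/
def escape {S A : Type*} (succs : S → A → Set S) (π : S → Option A) (s : S) : Set S :=
  reachFrom succs π s ∩ front succs π

/-- A policy is proper iff every domain state reaches a frontier state. -/
def proper {S A : Type*} (succs : S → A → Set S) (π : S → Option A) : Prop :=
  ∀ s ∈ pdom π, (escape succs π s).Nonempty

/-- `π'` is a sub-policy of `π` : restriction of `π` to a subset of its domain. -/
def subpolicy {S A : Type*} (π' π : S → Option A) : Prop :=
  ∀ s a, π' s = some a → π s = some a

/-- Goal-closed: every frontier state is a goal state. -/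
def goalClosed {S A : Type*} (succs : S → A → Set S) (Sg : Set S) (π : S → Option A) : Prop :=
  front succs π ⊆ Sg

/-- `remain(π) = (front(π) \ S*) ∪ ({s₀} \ (S* ∪ domain(π)))`. -/
def remainSet {S A : Type*} (succs : S → A → Set S) (Sg : Set S) (s0 : S)
    (π : S → Option A) : Set S :=
  (front succs π \ Sg) ∪ ({s0} \ (Sg ∪ pdom π))

/-- A solution: a strong-cyclic (goal-closed and proper) policy covering the initial state. -/
def isSolution {S A : Type*} (succs : S → A → Set S) (Sg : Set S) (s0 : S)
    (π : S → Option A) : Prop :=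
  goalClosed succs Sg π ∧ proper succs π ∧ s0 ∈ Sg ∪ pdom π

/-!
On the domain of a policy `π`, `escape π s` is `exitsFrom π s`, the unmapped states π-reachable
from `s`; off the domain `exitsFrom π s = {s}`. So the hypotheses give `exitsFrom π = exitsFrom π̂`.
Mapping an unmapped `s*` to `a` only creates trajectories that reach `s*` along `π` and then go on
along `π` from a successor of `s*`; hence `exitsFrom π' s` is `(exitsFrom π s ∪ δ) \ {s*}` if
`s* ∈ exitsFrom π s` and `exitsFrom π s` otherwise, where `δ = ⋃ u ∈ succs s* a, exitsFrom π u`.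
This depends on `π` only through `exitsFrom π`, so `π'` and `π̂'` share `exitsFrom`, and therefore
`escape` on their common domain.
-/

namespace Relation

theorem reflTransGen_or_edgesFrom_iff {α : Type*} {r : α → α → Prop} {c : α} {p : α → Prop}
    {s x : α} :
    ReflTransGen (fun y z => r y z ∨ y = c ∧ p z) s x ↔
      ReflTransGen r s x ∨ ReflTransGen r s c ∧ ∃ u, p u ∧ ReflTransGen r u x := by
  constructor
  · intro h
    induction h with
    | refl => exact .inl .refl
    | tail _ hyz ih =>
      rcases hyz with hyz | ⟨rfl, hz⟩
      · exact ih.imp (·.tail hyz) fun ⟨hsc, u, hu, hux⟩ => ⟨hsc, u, hu, hux.tail hyz⟩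
      · exact .inr ⟨ih.elim id (·.1), _, hz, .refl⟩
  · have lift : ∀ {y z}, ReflTransGen r y z → ReflTransGen (fun y z => r y z ∨ y = c ∧ p z) y z :=
      fun h => ReflTransGen.mono (fun _ _ => Or.inl) _ _ h
    rintro (h | ⟨hsc, u, hu, hux⟩)
    · exact lift h
    · exact ((lift hsc).tail (.inr ⟨rfl, hu⟩)).trans (lift hux)

end Relation

section PolicyExtension

variable {S A : Type*} (succs : S → A → Set S)

def exitsFrom (π : S → Option A) (s : S) : Set S :=
  reachFrom succs π s \ pdom π

variable {succs}

theorem reachFrom_of_notMem_pdom {π : S → Option A} {s : S} (hs : s ∉ pdom π) :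
    reachFrom succs π s = {s} := by
  ext x
  refine ⟨fun hx => ?_, fun hx => hx ▸ .refl⟩
  rcases hx.cases_head with rfl | ⟨_, ⟨b, hb, _⟩, _⟩
  · rfl
  · simp_all [pdom]

theorem exitsFrom_of_notMem_pdom {π : S → Option A} {s : S} (hs : s ∉ pdom π) :
    exitsFrom succs π s = {s} := by
  rw [exitsFrom, reachFrom_of_notMem_pdom hs]
  exact sdiff_eq_self_iff_disjoint.2 (by simpa using hs)

theorem escape_eq_exitsFrom {π : S → Option A} {s : S} (hs : s ∈ pdom π) :
    escape succs π s = exitsFrom succs π s := by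
  ext x
  exact ⟨fun ⟨hx, _, hxd⟩ => ⟨hx, hxd⟩, fun ⟨hx, hxd⟩ => ⟨hx, Set.mem_biUnion hs hx, hxd⟩⟩

theorem exitsFrom_eq_of_escape_eq {π π' : S → Option A} (hdom : pdom π' = pdom π)
    (hesc : ∀ s ∈ pdom π, escape succs π s = escape succs π' s) (s : S) :
    exitsFrom succs π s = exitsFrom succs π' s := by
  by_cases hs : s ∈ pdom π
  · rw [← escape_eq_exitsFrom hs, ← escape_eq_exitsFrom (hdom ▸ hs), hesc s hs]
  · rw [exitsFrom_of_notMem_pdom hs, exitsFrom_of_notMem_pdom (hdom ▸ hs)]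

variable [DecidableEq S] {π : S → Option A} {c : S} (a : A)

theorem pdom_update : pdom (Function.update π c (some a)) = insert c (pdom π) := by
  ext x
  rcases eq_or_ne x c with rfl | hne
  · simp [pdom]
  · simp [pdom, hne]

theorem pstep_update (hc : c ∉ pdom π) :
    pstep succs (Function.update π c (some a)) =
      fun y z => pstep succs π y z ∨ y = c ∧ z ∈ succs c a := by
  ext y z
  rcases eq_or_ne y c with rfl | hne
  · simp_all [pstep, pdom]
  · simp [pstep, hne]

theorem reachFrom_update (hc : c ∉ pdom π) (s : S) :
    reachFrom succs (Function.update π c (some a)) s =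
      reachFrom succs π s ∪
        {x | c ∈ reachFrom succs π s ∧ ∃ u ∈ succs c a, x ∈ reachFrom succs π u} := by
  ext x
  simp only [reachFrom, pstep_update a hc, Relation.reflTransGen_or_edgesFrom_iff]
  rfl

theorem exitsFrom_update (hc : c ∉ pdom π) (s : S) :
    exitsFrom succs (Function.update π c (some a)) s =
      (exitsFrom succs π s ∪
        {x | c ∈ exitsFrom succs π s ∧ ∃ u ∈ succs c a, x ∈ exitsFrom succs π u}) \ {c} := by
  ext x
  simp only [exitsFrom, reachFrom_update a hc, pdom_update, Set.mem_sdiff, Set.mem_union,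
    Set.mem_insert_iff, Set.mem_singleton_iff, Set.mem_ofPred_eq]
  tauto

theorem exitsFrom_update_congr {π' : S → Option A} (hc : c ∉ pdom π) (hc' : c ∉ pdom π')
    (h : ∀ s, exitsFrom succs π s = exitsFrom succs π' s) (s : S) :
    exitsFrom succs (Function.update π c (some a)) s =
      exitsFrom succs (Function.update π' c (some a)) s := by
  simp only [exitsFrom_update a hc, exitsFrom_update a hc', h]

end PolicyExtension

theorem lanes_extension_general {S A : Type*} [DecidableEq S] (succs : S → A → Set S)
    (π πhat : S → Option A)
    (hdom : pdom πhat = pdom π)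
    (hesc : ∀ s ∈ pdom π, escape succs π s = escape succs πhat s)
    (sstar : S) (hstar : sstar ∈ front succs π) (a : A) :
    ∀ s ∈ pdom (Function.update π sstar (some a)),
      escape succs (Function.update π sstar (some a)) s =
        escape succs (Function.update πhat sstar (some a)) s := by
  intro s hs
  have hs' : s ∈ pdom (Function.update πhat sstar (some a)) := by
    rwa [pdom_update, hdom, ← pdom_update]
  have hstar' : sstar ∉ pdom πhat := hdom ▸ hstar.2
  rw [escape_eq_exitsFrom hs, escape_eq_exitsFrom hs']
  exact exitsFrom_update_congr a hstar.2 hstar' (exitsFrom_eq_of_escape_eq hdom hesc) s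

/-- Lanes extension lemma: if `π̂` is a restriction of a policy `ρ` with the same domain as
`π` and pointwise-equal escape sets, then after adding the same mapping `s* ↦ a`
(with `s* ∈ front(π)` and `a` applicable to `s*`) to both, the escape sets still agree on
the whole (extended) domain. -/
theorem lanes_extension {S A : Type*} [DecidableEq S] (succs : S → A → Set S)
    (app : S → A → Prop)
    (π πhat ρ : S → Option A) (hsub : subpolicy πhat ρ)
    (hdom : pdom πhat = pdom π)
    (hesc : ∀ s ∈ pdom π, escape succs π s = escape succs πhat s)
    (sstar : S) (hstar : sstar ∈ front succs π) (a : A) (ha : app sstar a) :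
    ∀ s ∈ pdom (Function.update π sstar (some a)),
      escape succs (Function.update π sstar (some a)) s =
        escape succs (Function.update πhat sstar (some a)) s :=
  lanes_extension_general succs π πhat hdom hesc sstar hstar a
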